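/- Let k ≥ 1 IBs and m transactions be given, with TuTr, TuIB, TrIB binary matrices satisfying, for every transaction ℓ and IB j, the constraint ∑_{i=1}^n TuTr_{iℓ} − ∑_{i=1}^n TuTr_{iℓ}·TuIB_{ij} ≥ 1 − TrIB_{ℓj}, and for every transaction ℓ the constraint ∑_{j=1}^k TrIB_{ℓj} = 1. Then no transaction that accesses at least one tuple can be fully contained in two distinct IBs; that is, there do not exist j ≠ j' such that every tuple accessed by ℓ is assigned both to IB j and to IB j'. -/
import Mathlib


/-- Under constraints (6) and (7) of the IB demarcation MINLP, no transaction
that accesses at least one tuple can be fully contained in two distinct IBs. -/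
theorem ib_no_double_full_containment
    (n m k : ℕ) (hk : 1 ≤ k)
    (TuTr : Fin n → Fin m → ℤ) (TuIB : Fin n → Fin k → ℤ) (TrIB : Fin m → Fin k → ℤ)
    (hTuTr : ∀ i ℓ, TuTr i ℓ = 0 ∨ TuTr i ℓ = 1)
    (hTuIB : ∀ i j, TuIB i j = 0 ∨ TuIB i j = 1)
    (hTrIB : ∀ ℓ j, TrIB ℓ j = 0 ∨ TrIB ℓ j = 1)
    (hconstraint6 : ∀ (ℓ : Fin m) (j : Fin k),
      (∑ i, TuTr i ℓ) - (∑ i, TuTr i ℓ * TuIB i j) ≥ 1 - TrIB ℓ j)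
    (hconstraint7 : ∀ ℓ : Fin m, (∑ j, TrIB ℓ j) = 1)
    (ℓ : Fin m) (haccess : ∃ i, TuTr i ℓ = 1) :
    ¬ ∃ j j' : Fin k, j ≠ j' ∧
      (∀ i, TuTr i ℓ = 1 → TuIB i j = 1) ∧
      (∀ i, TuTr i ℓ = 1 → TuIB i j' = 1) := by
  rintro ⟨j, j', hne, hj, hj'⟩
  have key : ∀ jj : Fin k, (∀ i, TuTr i ℓ = 1 → TuIB i jj = 1) → TrIB ℓ jj = 1 := by
    intro jj h
    have heq : (∑ i, TuTr i ℓ * TuIB i jj) = ∑ i, TuTr i ℓ := by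
      apply Finset.sum_congr rfl
      intro i _
      rcases hTuTr i ℓ with h0 | h1
      · simp [h0]
      · rw [h1, h i h1, one_mul]
    have h6 := hconstraint6 ℓ jj
    rw [heq, sub_self] at h6
    rcases hTrIB ℓ jj with h0 | h1
    · rw [h0] at h6; omega
    · exact h1
  have hjj := key j hj
  have hjj' := key j' hj'
  have h7 := hconstraint7 ℓ
  have hle : TrIB ℓ j + TrIB ℓ j' ≤ ∑ x, TrIB ℓ x := by
    have : (∑ x ∈ ({j, j'} : Finset (Fin k)), TrIB ℓ x) ≤ ∑ x, TrIB ℓ x := by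
      apply Finset.sum_le_sum_of_subset_of_nonneg (Finset.subset_univ _)
      intro x _ _
      rcases hTrIB ℓ x with h0 | h1 <;> omega
    rwa [Finset.sum_pair hne] at this
  omega
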